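/- arXiv:1902.04572 — 2 statements merged into one kernel-verified Lean document; each statement's English description precedes it below -/
import Mathlib

section
/- Let ⊑ be weak trace inclusion on an LTS. Define, for a channel c, the restriction M∖c whose transitions are exactly the transitions of M whose labels are not an input or output on c. If M ⊑ N then M∖c ⊑ N∖c. -/
/-- Finite execution traces of a labelled transition system. -/
inductive Trace {S A : Type*} (step : S → A → S → Prop) : S → List A → S → Prop
  | nil (s : S) : Trace step s [] s
  | cons {s : S} {a : A} {s' : S} {t : List A} {s'' : S} :
      step s a s' → Trace step s' t s'' → Trace step s (a :: t) s''

/-- Weak traces: τ-transitions may be freely interleaved, and τ-actions occurring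
in the trace may be absorbed. -/
inductive WTrace {S A : Type*} (step : S → A → S → Prop) (τ : A) : S → List A → S → Prop
  | nil (s : S) : WTrace step τ s [] s
  | tau {s s' : S} {t : List A} {s'' : S} :
      step s τ s' → WTrace step τ s' t s'' → WTrace step τ s t s''
  | skip {s : S} {t : List A} {s'' : S} :
      WTrace step τ s t s'' → WTrace step τ s (τ :: t) s''
  | act {s : S} {a : A} {s' : S} {t : List A} {s'' : S} :
      a ≠ τ → step s a s' → WTrace step τ s' t s'' → WTrace step τ s (a :: t) s''

/-- The trace preorder: every trace of `M` is a weak trace of `N`. -/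
def TracePre {S A : Type*} (step : S → A → S → Prop) (τ : A) (M N : S) : Prop :=
  ∀ t M', Trace step M t M' → ∃ N', WTrace step τ N t N'

section Restriction

variable {S A : Type*} {step : S → A → S → Prop} {Q : A → Prop} {s s'' : S} {t : List A}

theorem Trace.of_restrict (h : Trace (fun s a s' => step s a s' ∧ Q a) s t s'') :
    Trace step s t s'' ∧ ∀ a ∈ t, Q a := by
  induction h with
  | nil s => exact ⟨.nil s, List.forall_mem_nil _⟩
  | cons hstep _ ih => exact ⟨.cons hstep.1 ih.1, List.forall_mem_cons.2 ⟨hstep.2, ih.2⟩⟩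

theorem WTrace.restrict {τ : A} (hτ : Q τ) (h : WTrace step τ s t s'') (ht : ∀ a ∈ t, Q a) :
    WTrace (fun s a s' => step s a s' ∧ Q a) τ s t s'' := by
  induction h with
  | nil s => exact .nil s
  | tau hstep _ ih => exact .tau ⟨hstep, hτ⟩ (ih ht)
  | skip _ ih => exact .skip (ih (List.forall_mem_cons.1 ht).2)
  | act hne hstep _ ih =>
    obtain ⟨ha, ht⟩ := List.forall_mem_cons.1 ht
    exact .act hne ⟨hstep, ha⟩ (ih ht)

end Restriction

/-- Compositionality under channel restriction: the restriction `M∖c` removes exactly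
the transitions whose labels are inputs/outputs on channel `c` (τ is never such a
label).  If `M ⊑ N` then `M∖c ⊑ N∖c`. -/
theorem stmt_12 {S A : Type*} (step : S → A → S → Prop) (τ : A)
    (isOnChan : A → Prop) (hτ : ¬ isOnChan τ)
    (M N : S) (h : TracePre step τ M N) :
    TracePre (fun s a s' => step s a s' ∧ ¬ isOnChan a) τ M N := by
  intro t M' hM
  obtain ⟨hM, hoff⟩ := hM.of_restrict
  obtain ⟨N', hN⟩ := h t M' hM
  exact ⟨N', hN.restrict hτ hoff⟩
end

section
/- In a composed LTS M ⊎ N where: tick-transitions of the composite arise exactly from simultaneous tick-transitions of both components, and any non-tick transition of the composite not due to a channel synchronisation arises from exactly one component (the other staying fixed), the following decomposition holds: if M ⊎ N performs a trace t, then there exist traces t_M of M and t_N of N with #tick(t_M) = #tick(t_N) = #tick(t), whose interleaving (identifying the synchronized pairs) yields t. -/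
/-- Parallel composition of two physically-disjoint systems: `tick` is performed
simultaneously by both components, complementary actions (related by `comp`)
synchronise into `τ`, and any other action is performed by exactly one component. -/
inductive CompStep {S1 S2 A : Type*} (step1 : S1 → A → S1 → Prop)
    (step2 : S2 → A → S2 → Prop) (tick τ : A) (comp : A → A → Prop) :
    S1 × S2 → A → S1 × S2 → Prop
  | tickStep {m m' : S1} {n n' : S2} :
      step1 m tick m' → step2 n tick n' →
      CompStep step1 step2 tick τ comp (m, n) tick (m', n')
  | left {a : A} {m m' : S1} {n : S2} :
      a ≠ tick → step1 m a m' →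
      CompStep step1 step2 tick τ comp (m, n) a (m', n)
  | right {a : A} {m : S1} {n n' : S2} :
      a ≠ tick → step2 n a n' →
      CompStep step1 step2 tick τ comp (m, n) a (m, n')
  | sync {a b : A} {m m' : S1} {n n' : S2} :
      comp a b → step1 m a m' → step2 n b n' →
      CompStep step1 step2 tick τ comp (m, n) τ (m', n')

/-- Interleaving of two component traces into a composite trace: `tick` is taken
simultaneously from both, synchronised pairs (identified by `comp`) produce a `τ`,
and other actions are interleaved. -/
inductive Mix {A : Type*} (tick τ : A) (comp : A → A → Prop) :
    List A → List A → List A → Prop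
  | nil : Mix tick τ comp [] [] []
  | tickStep {tM tN t : List A} :
      Mix tick τ comp tM tN t → Mix tick τ comp (tick :: tM) (tick :: tN) (tick :: t)
  | left {a : A} {tM tN t : List A} :
      a ≠ tick → Mix tick τ comp tM tN t → Mix tick τ comp (a :: tM) tN (a :: t)
  | right {a : A} {tM tN t : List A} :
      a ≠ tick → Mix tick τ comp tM tN t → Mix tick τ comp tM (a :: tN) (a :: t)
  | sync {a b : A} {tM tN t : List A} :
      comp a b → Mix tick τ comp tM tN t →
      Mix tick τ comp (a :: tM) (b :: tN) (τ :: t)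

theorem Trace.exists_mix_of_compStep {S1 S2 A : Type*}
    {step1 : S1 → A → S1 → Prop} {step2 : S2 → A → S2 → Prop}
    {tick τ : A} {comp : A → A → Prop} {p : S1 × S2} {t : List A} {p' : S1 × S2}
    (h : Trace (CompStep step1 step2 tick τ comp) p t p') :
    ∃ tM tN : List A,
      Trace step1 p.1 tM p'.1 ∧ Trace step2 p.2 tN p'.2 ∧ Mix tick τ comp tM tN t := by
  induction h with
  | nil => exact ⟨[], [], .nil _, .nil _, .nil⟩
  | cons hstep _ ih =>
    obtain ⟨tM, tN, h1, h2, hmix⟩ := ih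
    cases hstep with
    | tickStep s1 s2 => exact ⟨_, _, .cons s1 h1, .cons s2 h2, .tickStep hmix⟩
    | left hne s1 => exact ⟨_, _, .cons s1 h1, h2, .left hne hmix⟩
    | right hne s2 => exact ⟨_, _, h1, .cons s2 h2, .right hne hmix⟩
    | sync hc s1 s2 => exact ⟨_, _, .cons s1 h1, .cons s2 h2, .sync hc hmix⟩

theorem Mix.count_tick_eq {A : Type*} [DecidableEq A] {tick τ : A} {comp : A → A → Prop}
    (hττ : τ ≠ tick) (hcomp : ∀ a b, comp a b → a ≠ tick ∧ b ≠ tick)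
    {tM tN t : List A} (h : Mix tick τ comp tM tN t) :
    tM.count tick = t.count tick ∧ tN.count tick = t.count tick := by
  induction h with
  | nil => exact ⟨rfl, rfl⟩
  | tickStep _ ih => simp [ih]
  | left hne _ ih => simp [ih, hne]
  | right hne _ ih => simp [ih, hne]
  | sync hc _ ih => simp [ih, hcomp _ _ hc, hττ]

/-- Decomposition of composite traces: any trace `t` of `M ⊎ N` arises as the
interleaving (identifying the synchronised pairs) of a trace of `M` and a trace
of `N`, both with the same number of `tick`s as `t`. -/
theorem stmt_13 {S1 S2 A : Type*} [DecidableEq A]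
    (step1 : S1 → A → S1 → Prop) (step2 : S2 → A → S2 → Prop)
    (tick τ : A) (comp : A → A → Prop)
    (hττ : τ ≠ tick) (hcomp : ∀ a b, comp a b → a ≠ tick ∧ b ≠ tick)
    (p : S1 × S2) (t : List A) (p' : S1 × S2)
    (h : Trace (CompStep step1 step2 tick τ comp) p t p') :
    ∃ tM tN : List A,
      Trace step1 p.1 tM p'.1 ∧ Trace step2 p.2 tN p'.2 ∧
      Mix tick τ comp tM tN t ∧
      tM.count tick = t.count tick ∧ tN.count tick = t.count tick := by
  obtain ⟨tM, tN, h1, h2, hmix⟩ := h.exists_mix_of_compStep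
  exact ⟨tM, tN, h1, h2, hmix, hmix.count_tick_eq hττ hcomp⟩
end
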